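/- For a short exact sequence 0 → M' → M → M'' → 0 of finitely generated modules over a commutative ring R, one has the inclusion Fitt_R(M') · Fitt_R(M'') ⊆ Fitt_R(M). -/

import Mathlib

/-- The 0-th Fitting ideal of an `R`-module `M`: for any (equivalently, some)
finite presentation `R^n →ₗ M → 0`, the ideal generated by the `n × n` minors of
the relations, i.e. by determinants of square matrices all of whose rows are
relations. We take the supremum over all finite free presentations; for a
finitely generated module all the inner ideals agree. -/
noncomputable def fittingIdeal (R : Type*) [CommRing R] (M : Type*) [AddCommGroup M]
    [Module R M] : Ideal R :=
  ⨆ (n : ℕ) (π : (Fin n → R) →ₗ[R] M) (_ : Function.Surjective π),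
    Ideal.span {d | ∃ A : Matrix (Fin n) (Fin n) R, (∀ i, π (A i) = 0) ∧ d = A.det}

/-!
Presentations `π' : R^ι → M'` and `π'' : R^κ → M''` glue to a presentation of `M`: lift `π''`
through `g` to `σ : R^κ → M` (free modules are projective) and take `f ∘ π'` on `R^ι`, `σ` on
`R^κ`. For relation matrices `A'` of `π'` and `A''` of `π''`, each `σ (A'' k)` lies in the kernel
of `g`, hence equals `-f (π' (C k))` for some row `C k`. The block matrix `[[A', 0], [C, A'']]`
is then a relation matrix of the glued presentation, with determinant `det A' * det A''`.
-/

open Matrix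

section FittingIdeal

variable {R : Type*} [CommRing R] {M : Type*} [AddCommGroup M] [Module R M]

theorem span_minors_le_fittingIdeal {n : ℕ} (π : (Fin n → R) →ₗ[R] M)
    (hπ : Function.Surjective π) :
    Ideal.span {d | ∃ A : Matrix (Fin n) (Fin n) R, (∀ i, π (A i) = 0) ∧ d = A.det} ≤
      fittingIdeal R M :=
  le_iSup₂_of_le n π (le_iSup_of_le hπ le_rfl)

theorem det_mem_fittingIdeal {ι : Type*} [Fintype ι] [DecidableEq ι]
    (π : (ι → R) →ₗ[R] M) (hπ : Function.Surjective π)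
    (A : Matrix ι ι R) (hA : ∀ i, π (A i) = 0) : A.det ∈ fittingIdeal R M := by
  let e := Fintype.equivFin ι
  let π₀ := π ∘ₗ (LinearEquiv.funCongrLeft R R e).toLinearMap
  have hπ₀ : Function.Surjective π₀ := hπ.comp (LinearEquiv.surjective _)
  rw [← det_reindex_self e A]
  refine span_minors_le_fittingIdeal π₀ hπ₀ (Ideal.subset_span ⟨_, fun i => ?_, rfl⟩)
  have hrow : LinearEquiv.funCongrLeft R R e (reindex e e A i) = A (e.symm i) := by
    ext j
    simp [LinearEquiv.funCongrLeft_apply]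
  show π (LinearEquiv.funCongrLeft R R e (reindex e e A i)) = 0
  rw [hrow, hA]

end FittingIdeal

section Exact

variable {R : Type*} [CommRing R] {M' M M'' : Type*}
  [AddCommGroup M'] [Module R M'] [AddCommGroup M] [Module R M] [AddCommGroup M''] [Module R M'']
  {f : M' →ₗ[R] M} {g : M →ₗ[R] M''}

theorem surjective_coprod_of_exact {P' P'' : Type*} [AddCommGroup P'] [Module R P']
    [AddCommGroup P''] [Module R P''] (hfg : Function.Exact f g)
    {p : P' →ₗ[R] M'} (hp : Function.Surjective p)
    {s : P'' →ₗ[R] M} (hs : Function.Surjective (g ∘ₗ s)) :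
    Function.Surjective ((f ∘ₗ p).coprod s) := by
  intro m
  obtain ⟨y, hy⟩ := hs (g m)
  obtain ⟨m', hm'⟩ := (hfg (m - s y)).mp (by simpa [sub_eq_zero] using hy.symm)
  obtain ⟨x, rfl⟩ := hp m'
  exact ⟨(x, y), by simp [hm']⟩

theorem det_mul_det_mem_fittingIdeal_of_exact (hg : Function.Surjective g)
    (hfg : Function.Exact f g)
    {ι κ : Type*} [Fintype ι] [DecidableEq ι] [Fintype κ] [DecidableEq κ]
    {π' : (ι → R) →ₗ[R] M'} (hπ' : Function.Surjective π')
    {π'' : (κ → R) →ₗ[R] M''} (hπ'' : Function.Surjective π'')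
    {A' : Matrix ι ι R} (hA' : ∀ i, π' (A' i) = 0)
    {A'' : Matrix κ κ R} (hA'' : ∀ k, π'' (A'' k) = 0) :
    A'.det * A''.det ∈ fittingIdeal R M := by
  obtain ⟨σ, hσ⟩ := Module.projective_lifting_property g π'' hg
  let π : (ι ⊕ κ → R) →ₗ[R] M :=
    (f ∘ₗ π').coprod σ ∘ₗ (LinearEquiv.sumArrowLequivProdArrow ι κ R R).toLinearMap
  have hπ : Function.Surjective π :=
    (surjective_coprod_of_exact hfg hπ' (hσ ▸ hπ'')).comp (LinearEquiv.surjective _)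
  have hC : ∀ k, ∃ c : ι → R, f (π' c) = -σ (A'' k) := by
    intro k
    have hgσ : g (σ (A'' k)) = 0 := by rw [← LinearMap.comp_apply, hσ, hA'']
    obtain ⟨m', hm'⟩ := (hfg _).mp hgσ
    obtain ⟨c, hc⟩ := hπ' (-m')
    exact ⟨c, by rw [hc, map_neg, hm']⟩
  choose C hC using hC
  rw [← det_fromBlocks_zero₁₂ A' (of C) A'']
  refine det_mem_fittingIdeal π hπ _ ?_
  rintro (i | k)
  · show f (π' (A' i)) + σ 0 = 0
    rw [hA', map_zero, map_zero, add_zero]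
  · show f (π' (C k)) + σ (A'' k) = 0
    rw [hC, neg_add_cancel]

end Exact

theorem fittingIdeal_mul_le_of_exact_general (R : Type*) [CommRing R]
    (M' M M'' : Type*) [AddCommGroup M'] [Module R M'] [AddCommGroup M] [Module R M]
    [AddCommGroup M''] [Module R M'']
    (f : M' →ₗ[R] M) (g : M →ₗ[R] M'')
    (hg : Function.Surjective g)
    (hfg : Function.Exact f g) :
    fittingIdeal R M' * fittingIdeal R M'' ≤ fittingIdeal R M := by
  simp only [fittingIdeal, Submodule.iSup_mul, Submodule.mul_iSup, iSup_le_iff]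
  intro n'' π'' hπ'' n' π' hπ'
  rw [Ideal.span_mul_span, Ideal.span_le]
  rintro _ ⟨_, ⟨A', hA', rfl⟩, _, ⟨A'', hA'', rfl⟩, rfl⟩
  exact det_mul_det_mem_fittingIdeal_of_exact hg hfg hπ' hπ'' hA' hA''

/-- For a short exact sequence `0 → M' → M → M'' → 0` of finitely generated
modules over a commutative ring `R`, we have `Fitt(M') · Fitt(M'') ⊆ Fitt(M)`. -/
theorem fittingIdeal_mul_le_of_exact (R : Type*) [CommRing R]
    (M' M M'' : Type*) [AddCommGroup M'] [Module R M'] [AddCommGroup M] [Module R M]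
    [AddCommGroup M''] [Module R M'']
    [Module.Finite R M'] [Module.Finite R M] [Module.Finite R M'']
    (f : M' →ₗ[R] M) (g : M →ₗ[R] M'')
    (hf : Function.Injective f) (hg : Function.Surjective g)
    (hfg : Function.Exact f g) :
    fittingIdeal R M' * fittingIdeal R M'' ≤ fittingIdeal R M :=
  fittingIdeal_mul_le_of_exact_general R M' M M'' f g hg hfg
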